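/- Let (η_i)_{i≥1} be a nonincreasing sequence of positive reals, M ≥ 0, and (x_i)_{i≥0}, (u_i)_{i≥0}, (v_i)_{i≥0} real sequences with 0 ≤ x_i ≤ M for all i. Suppose that x_{i+1} ≤ (1−2η_{i+1})·x_i + 2η_{i+1}·u_i + v_i for all i ∈ ℕ. Then for every n ∈ ℕ: (1/(1+n))·∑_{i=0}^{n} x_i ≤ M/(2(1+n)·η_{n+1}) + (1/(1+n))·∑_{i=0}^{n} u_i + (1/(1+n))·∑_{i=0}^{n} v_i/(2η_{i+1}). -/

import Mathlib

open Finset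

/-!
Dividing the recursion by `2η_{i+1}` bounds each `x_i` by `(x_i - x_{i+1}) / (2η_{i+1}) + u_i +
v_i / (2η_{i+1})`. The weights `1 / (2η_{i+1})` are nondecreasing, so by Abel summation the sum of
the first terms telescopes up to increments of the weights, each multiplied by some `x_i ≤ M`;
hence it is at most `M / (2η_{n+1})`.
-/

theorem le_inv_mul_sub_add_of_le_one_sub_mul_add {a x y u v : ℝ} (ha : 0 < a)
    (h : y ≤ (1 - a) * x + a * u + v) : x ≤ a⁻¹ * (x - y) + u + v / a := by
  have key : a * x ≤ (x - y) + a * u + v := by linarith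
  calc x = a⁻¹ * (a * x) := by field_simp
    _ ≤ a⁻¹ * ((x - y) + a * u + v) := by gcongr
    _ = a⁻¹ * (x - y) + u + v / a := by field_simp

theorem sum_range_mul_sub_succ_add_mul_le {w x : ℕ → ℝ} {M : ℝ} (hw : Monotone w)
    (hw0 : 0 ≤ w 0) (hxM : ∀ i, x i ≤ M) (n : ℕ) :
    ∑ i ∈ range (n + 1), w i * (x i - x (i + 1)) + w n * x (n + 1) ≤ M * w n := by
  induction n with
  | zero => simp only [zero_add, sum_range_one]; linarith [mul_le_mul_of_nonneg_left (hxM 0) hw0]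
  | succ n ih =>
    rw [sum_range_succ]
    have hinc : (w (n + 1) - w n) * x (n + 1) ≤ (w (n + 1) - w n) * M :=
      mul_le_mul_of_nonneg_left (hxM (n + 1)) (sub_nonneg.2 (hw n.le_succ))
    linarith

theorem sum_range_mul_sub_succ_le {w x : ℕ → ℝ} {M : ℝ} (hw : Monotone w) (hw0 : 0 ≤ w 0)
    (hx0 : ∀ i, 0 ≤ x i) (hxM : ∀ i, x i ≤ M) (n : ℕ) :
    ∑ i ∈ range (n + 1), w i * (x i - x (i + 1)) ≤ M * w n := by
  have hlast : 0 ≤ w n * x (n + 1) := mul_nonneg (hw0.trans (hw n.zero_le)) (hx0 _)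
  linarith [sum_range_mul_sub_succ_add_mul_le hw hw0 hxM n]

theorem averaged_recursion_bound_general
    (η : ℕ → ℝ) (hηpos : ∀ i, 1 ≤ i → 0 < η i)
    (hηmono : ∀ i j, 1 ≤ i → i ≤ j → η j ≤ η i)
    (M : ℝ)
    (x u v : ℕ → ℝ) (hx0 : ∀ i, 0 ≤ x i) (hxM : ∀ i, x i ≤ M)
    (hrec : ∀ i : ℕ, x (i + 1) ≤ (1 - 2 * η (i + 1)) * x i + 2 * η (i + 1) * u i + v i)
    (n : ℕ) :
    (1 / (1 + (n : ℝ))) * ∑ i ∈ Finset.range (n + 1), x i ≤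
      M / (2 * (1 + (n : ℝ)) * η (n + 1))
      + (1 / (1 + (n : ℝ))) * ∑ i ∈ Finset.range (n + 1), u i
      + (1 / (1 + (n : ℝ))) * ∑ i ∈ Finset.range (n + 1), v i / (2 * η (i + 1)) := by
  set w : ℕ → ℝ := fun i ↦ (2 * η (i + 1))⁻¹
  have hstep : ∀ i, 0 < 2 * η (i + 1) := fun i ↦ by linarith [hηpos (i + 1) i.succ_pos]
  have hw : Monotone w := monotone_nat_of_le_succ fun i ↦
    inv_anti₀ (hstep (i + 1)) (by linarith [hηmono (i + 1) (i + 2) i.succ_pos i.succ.le_succ])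
  have hsum : ∑ i ∈ range (n + 1), x i ≤ ∑ i ∈ range (n + 1), w i * (x i - x (i + 1))
      + ∑ i ∈ range (n + 1), u i + ∑ i ∈ range (n + 1), v i / (2 * η (i + 1)) := by
    rw [← sum_add_distrib, ← sum_add_distrib]
    exact sum_le_sum fun i _ ↦ le_inv_mul_sub_add_of_le_one_sub_mul_add (hstep i) (hrec i)
  have habel := sum_range_mul_sub_succ_le hw (inv_pos.2 (hstep 0)).le hx0 hxM n
  have hscale : M / (2 * (1 + (n : ℝ)) * η (n + 1)) = 1 / (1 + (n : ℝ)) * (M * w n) := by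
    simp only [w]
    field_simp
  rw [hscale, ← mul_add, ← mul_add]
  gcongr
  linarith

/-- Deterministic averaging bound: if `0 ≤ x i ≤ M` satisfies the one-step
recursion `x (i+1) ≤ (1 - 2η (i+1)) x i + 2η (i+1) u i + v i` for a
nonincreasing positive step-size sequence `(η i)_{i ≥ 1}`, then the Cesàro
average of `x` is bounded as stated. -/
theorem averaged_recursion_bound
    (η : ℕ → ℝ) (hηpos : ∀ i, 1 ≤ i → 0 < η i)
    (hηmono : ∀ i j, 1 ≤ i → i ≤ j → η j ≤ η i)
    (M : ℝ) (hM : 0 ≤ M)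
    (x u v : ℕ → ℝ) (hx0 : ∀ i, 0 ≤ x i) (hxM : ∀ i, x i ≤ M)
    (hrec : ∀ i : ℕ, x (i + 1) ≤ (1 - 2 * η (i + 1)) * x i + 2 * η (i + 1) * u i + v i)
    (n : ℕ) :
    (1 / (1 + (n : ℝ))) * ∑ i ∈ Finset.range (n + 1), x i ≤
      M / (2 * (1 + (n : ℝ)) * η (n + 1))
      + (1 / (1 + (n : ℝ))) * ∑ i ∈ Finset.range (n + 1), u i
      + (1 / (1 + (n : ℝ))) * ∑ i ∈ Finset.range (n + 1), v i / (2 * η (i + 1)) :=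
  averaged_recursion_bound_general η hηpos hηmono M x u v hx0 hxM hrec n
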